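/- arXiv:2411.08589 — 4 statements merged into one kernel-verified Lean document; each statement's English description precedes it below -/
import Mathlib

section
/- Let a, b, c, d be probability measures on ℝ with finite second moment, and let x, y ≥ 0 be real numbers. If Δ(a)·Δ(b) ≥ x and Δ(c)·Δ(d) ≥ y, then Δ(a ⋆ c)·Δ(b ⋆ d) ≥ x + y. (Proposition 1 of the paper, used to derive all frame-relative uncertainty relations.) -/
open MeasureTheory

/-- Mean of a measure on ℝ. -/
noncomputable def mMean (μ : Measure ℝ) : ℝ := ∫ x, x ∂μ

/-- Variance Δ² of a measure on ℝ. -/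
noncomputable def mVar (μ : Measure ℝ) : ℝ := ∫ x, (x - mMean μ) ^ 2 ∂μ

/-- Standard deviation Δ of a measure on ℝ. -/
noncomputable def mStd (μ : Measure ℝ) : ℝ := Real.sqrt (mVar μ)

/-- μ has finite second moment. -/
def FinSecondMoment (μ : Measure ℝ) : Prop := Integrable (fun x => x ^ 2) μ

/-- Convolution of two measures on ℝ: pushforward of the product under addition. -/
noncomputable def mConv (a b : Measure ℝ) : Measure ℝ :=
  Measure.map (fun p : ℝ × ℝ => p.1 + p.2) (a.prod b)

/-! Variances add under convolution, so `Δ(a ⋆ c) = √(Δ(a)² + Δ(c)²)` and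
`Δ(b ⋆ d) = √(Δ(b)² + Δ(d)²)`; by Cauchy–Schwarz in `ℝ²` their product is at least
`Δ(a)Δ(b) + Δ(c)Δ(d) ≥ x + y`. -/

open ProbabilityTheory

lemma mVar_eq_variance (μ : Measure ℝ) : mVar μ = Var[id; μ] :=
  (variance_eq_integral measurable_id.aemeasurable).symm

lemma FinSecondMoment.memLp_id {μ : Measure ℝ} (hμ : FinSecondMoment μ) :
    MemLp id 2 μ :=
  (memLp_two_iff_integrable_sq aestronglyMeasurable_id).mpr hμ

lemma mVar_mConv (a c : Measure ℝ) [IsProbabilityMeasure a] [IsProbabilityMeasure c]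
    (ha : FinSecondMoment a) (hc : FinSecondMoment c) :
    mVar (mConv a c) = mVar a + mVar c := by
  simp only [mVar_eq_variance]
  rw [mConv, variance_id_map (by fun_prop)]
  simpa only [id] using variance_add_prod ha.memLp_id hc.memLp_id

lemma mStd_sq (μ : Measure ℝ) : mStd μ ^ 2 = mVar μ :=
  Real.sq_sqrt (integral_nonneg fun _ => sq_nonneg _)

lemma mStd_mConv (a c : Measure ℝ) [IsProbabilityMeasure a] [IsProbabilityMeasure c]
    (ha : FinSecondMoment a) (hc : FinSecondMoment c) :
    mStd (mConv a c) = √(mStd a ^ 2 + mStd c ^ 2) := by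
  rw [mStd, mVar_mConv a c ha hc, mStd_sq, mStd_sq]

lemma mul_add_mul_le_sqrt_mul_sqrt (p q r s : ℝ) :
    p * q + r * s ≤ √(p ^ 2 + r ^ 2) * √(q ^ 2 + s ^ 2) := by
  rw [← Real.sqrt_mul (by positivity)]
  refine le_trans (le_abs_self _) (Real.abs_le_sqrt ?_)
  nlinarith [sq_nonneg (p * s - q * r)]

theorem stmt0_general (a b c d : Measure ℝ)
    [IsProbabilityMeasure a] [IsProbabilityMeasure b]
    [IsProbabilityMeasure c] [IsProbabilityMeasure d]
    (ha : FinSecondMoment a) (hb : FinSecondMoment b)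
    (hc : FinSecondMoment c) (hd : FinSecondMoment d)
    (x y : ℝ)
    (hab : mStd a * mStd b ≥ x) (hcd : mStd c * mStd d ≥ y) :
    mStd (mConv a c) * mStd (mConv b d) ≥ x + y := by
  rw [mStd_mConv a c ha hc, mStd_mConv b d hb hd]
  calc x + y ≤ mStd a * mStd b + mStd c * mStd d := add_le_add hab hcd
    _ ≤ _ := mul_add_mul_le_sqrt_mul_sqrt _ _ _ _

/-- Proposition 1: if Δ(a)Δ(b) ≥ x and Δ(c)Δ(d) ≥ y then Δ(a⋆c)Δ(b⋆d) ≥ x + y. -/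
theorem stmt0 (a b c d : Measure ℝ)
    [IsProbabilityMeasure a] [IsProbabilityMeasure b]
    [IsProbabilityMeasure c] [IsProbabilityMeasure d]
    (ha : FinSecondMoment a) (hb : FinSecondMoment b)
    (hc : FinSecondMoment c) (hd : FinSecondMoment d)
    (x y : ℝ) (hx : 0 ≤ x) (hy : 0 ≤ y)
    (hab : mStd a * mStd b ≥ x) (hcd : mStd c * mStd d ≥ y) :
    mStd (mConv a c) * mStd (mConv b d) ≥ x + y :=
  stmt0_general a b c d ha hb hc hd x y hab hcd
end

section
/- Let n ≥ 1, let a₁, …, aₙ and b₁, …, bₙ be probability measures on ℝ with finite second moment, and let x₁, …, xₙ ≥ 0 satisfy Δ(aᵢ)·Δ(bᵢ) ≥ xᵢ for every i. Then Δ(a₁ ⋆ ⋯ ⋆ aₙ)·Δ(b₁ ⋆ ⋯ ⋆ bₙ) ≥ x₁ + ⋯ + xₙ. (Iterated form of Proposition 1, used for the bounds 3/2 and 2 in the frame-relative uncertainty relations.) -/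
open MeasureTheory

/-- Iterated convolution a₁ ⋆ a₂ ⋆ ⋯ ⋆ aₙ of a (nonempty) family of measures on ℝ. -/
noncomputable def mConvFold : {n : ℕ} → (Fin (n + 1) → Measure ℝ) → Measure ℝ
  | 0, a => a 0
  | _ + 1, a => mConv (mConvFold (fun i => a i.castSucc)) (a (Fin.last _))

/-! Convolving independent laws adds variances, so Δ²(a₁ ⋆ ⋯ ⋆ aₙ) = ∑ Δ²(aᵢ), and likewise for the
bᵢ. The claim is then the Cauchy–Schwarz inequality
∑ Δ(aᵢ) Δ(bᵢ) ≤ (∑ Δ²(aᵢ))^{1/2} (∑ Δ²(bᵢ))^{1/2}. -/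

open ProbabilityTheory

lemma finSecondMoment_iff_memLp (μ : Measure ℝ) : FinSecondMoment μ ↔ MemLp id 2 μ :=
  (memLp_two_iff_integrable_sq aestronglyMeasurable_id).symm

section Convolution

variable {μ ν : Measure ℝ} [IsProbabilityMeasure μ] [IsProbabilityMeasure ν]

lemma memLp_id_conv (hμ : MemLp id 2 μ) (hν : MemLp id 2 ν) : MemLp id 2 (μ ∗ ν) :=
  (memLp_map_measure_iff aestronglyMeasurable_id (by fun_prop)).2
    ((hμ.comp_fst ν).add (hν.comp_snd μ))

lemma variance_id_conv (hμ : MemLp id 2 μ) (hν : MemLp id 2 ν) :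
    Var[id; μ ∗ ν] = Var[id; μ] + Var[id; ν] := by
  rw [Measure.conv, variance_map aemeasurable_id (by fun_prop), ← variance_add_prod hμ hν]
  rfl

end Convolution

lemma isProbabilityMeasure_mConvFold {n : ℕ} (a : Fin (n + 1) → Measure ℝ)
    (hap : ∀ i, IsProbabilityMeasure (a i)) : IsProbabilityMeasure (mConvFold a) := by
  induction n with
  | zero => exact hap 0
  | succ n ih =>
    have := ih _ fun i => hap i.castSucc
    have := hap (Fin.last _)
    exact Measure.probabilitymeasure_of_probabilitymeasures_conv _ _

lemma memLp_id_mConvFold {n : ℕ} (a : Fin (n + 1) → Measure ℝ)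
    (hap : ∀ i, IsProbabilityMeasure (a i)) (ha : ∀ i, MemLp id 2 (a i)) :
    MemLp id 2 (mConvFold a) := by
  induction n with
  | zero => exact ha 0
  | succ n ih =>
    have := isProbabilityMeasure_mConvFold _ fun i => hap i.castSucc
    have := hap (Fin.last _)
    exact memLp_id_conv (ih _ (fun i => hap _) fun i => ha _) (ha _)

lemma mVar_mConvFold {n : ℕ} (a : Fin (n + 1) → Measure ℝ)
    (hap : ∀ i, IsProbabilityMeasure (a i)) (ha : ∀ i, FinSecondMoment (a i)) :
    mVar (mConvFold a) = ∑ i, mVar (a i) := by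
  simp only [finSecondMoment_iff_memLp] at ha
  simp only [mVar_eq_variance]
  induction n with
  | zero => simp [mConvFold]
  | succ n ih =>
    have := isProbabilityMeasure_mConvFold _ fun i => hap i.castSucc
    have := hap (Fin.last _)
    rw [Fin.sum_univ_castSucc, ← ih _ (fun i => hap _) fun i => ha _]
    exact variance_id_conv (memLp_id_mConvFold _ (fun i => hap _) fun i => ha _) (ha _)

lemma mVar_nonneg (μ : Measure ℝ) : 0 ≤ mVar μ :=
  integral_nonneg fun _ => sq_nonneg _

theorem stmt2_general (n : ℕ) (a b : Fin (n + 1) → Measure ℝ)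
    (hap : ∀ i, IsProbabilityMeasure (a i)) (hbp : ∀ i, IsProbabilityMeasure (b i))
    (ha : ∀ i, FinSecondMoment (a i)) (hb : ∀ i, FinSecondMoment (b i))
    (x : Fin (n + 1) → ℝ)
    (hab : ∀ i, mStd (a i) * mStd (b i) ≥ x i) :
    mStd (mConvFold a) * mStd (mConvFold b) ≥ ∑ i, x i :=
  calc ∑ i, x i
      ≤ ∑ i, mStd (a i) * mStd (b i) := Finset.sum_le_sum fun i _ => hab i
    _ ≤ √(∑ i, mVar (a i)) * √(∑ i, mVar (b i)) :=
        Real.sum_sqrt_mul_sqrt_le _ (fun i => mVar_nonneg _) fun i => mVar_nonneg _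
    _ = mStd (mConvFold a) * mStd (mConvFold b) := by
        rw [mStd, mStd, mVar_mConvFold a hap ha, mVar_mConvFold b hbp hb]

/-- Iterated form of Proposition 1: if Δ(aᵢ)Δ(bᵢ) ≥ xᵢ for each i, then
Δ(a₁ ⋆ ⋯ ⋆ aₙ)·Δ(b₁ ⋆ ⋯ ⋆ bₙ) ≥ x₁ + ⋯ + xₙ. -/
theorem stmt2 (n : ℕ) (a b : Fin (n + 1) → Measure ℝ)
    (hap : ∀ i, IsProbabilityMeasure (a i)) (hbp : ∀ i, IsProbabilityMeasure (b i))
    (ha : ∀ i, FinSecondMoment (a i)) (hb : ∀ i, FinSecondMoment (b i))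
    (x : Fin (n + 1) → ℝ) (hx : ∀ i, 0 ≤ x i)
    (hab : ∀ i, mStd (a i) * mStd (b i) ≥ x i) :
    mStd (mConvFold a) * mStd (mConvFold b) ≥ ∑ i, x i :=
  stmt2_general n a b hap hbp ha hb x hab
end

section
/- Position margin of a covariant phase-space observable: for Schwartz functions φ, ψ on ℝ and every q ∈ ℝ, ∫_ℝ P_{φ,ψ}(q,p) dp = ∫_ℝ |φ(x − q)|² |ψ(x)|² dx = (f ⋆ g)(q), where f(y) = |φ(−y)|², g(y) = |ψ(y)|², and ⋆ denotes convolution of functions with respect to Lebesgue measure. Thus the position margin of the phase-space distribution is the smearing of the position distribution |ψ|² by the measure with density |φ(−·)|². -/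
/-!
For fixed `q`, `p ↦ P_{φ,ψ}(q,p)` is `|𝓕 h|²` for the Schwartz function
`h x = ψ x · conj (φ (x - q))`, so Plancherel turns its integral into `∫ |h|²`, which is
`∫ |φ(x - q)|² |ψ(x)|² dx`. This is already the convolution integral, as `-(q - y) = y - q`.
-/

open MeasureTheory
open scoped FourierTransform

/-- Phase-space density P_{φ,ψ}(q,p) = |∫ ψ(x) conj(φ(x−q)) e^{−2πipx} dx|². -/
noncomputable def Pdens (φ ψ : ℝ → ℂ) (q p : ℝ) : ℝ :=
  ‖∫ x : ℝ, ψ x * (starRingEnd ℂ) (φ (x - q)) *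
      Complex.exp (-(2 * Real.pi * p * x : ℝ) * Complex.I)‖ ^ 2

/-- Convolution of real functions on ℝ w.r.t. Lebesgue measure. -/
noncomputable def fConv (f g : ℝ → ℝ) : ℝ → ℝ := fun q => ∫ y, f (q - y) * g y

open SchwartzMap

namespace SchwartzMap

noncomputable def mulConjTranslate (φ ψ : 𝓢(ℝ, ℂ)) (q : ℝ) : 𝓢(ℝ, ℂ) :=
  pairing (ContinuousLinearMap.mul ℝ ℂ) ψ
    (postcompCLM Complex.conjCLE.toContinuousLinearMap (compSubConstCLM ℝ q φ))

theorem mulConjTranslate_apply (φ ψ : 𝓢(ℝ, ℂ)) (q x : ℝ) :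
    mulConjTranslate φ ψ q x = ψ x * starRingEnd ℂ (φ (x - q)) := rfl

end SchwartzMap

theorem Pdens_eq_norm_sq_fourier (φ ψ : ℝ → ℂ) (q p : ℝ) :
    Pdens φ ψ q p = ‖𝓕 (fun x => ψ x * starRingEnd ℂ (φ (x - q))) p‖ ^ 2 := by
  rw [Pdens, Real.fourier_eq']
  congr 3 with x
  simp only [RCLike.inner_apply, conj_trivial, smul_eq_mul]
  push_cast
  ring_nf

theorem integral_Pdens_eq (φ ψ : 𝓢(ℝ, ℂ)) (q : ℝ) :
    ∫ p, Pdens φ ψ q p = ∫ x, ‖φ (x - q)‖ ^ 2 * ‖ψ x‖ ^ 2 := calc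
  ∫ p, Pdens φ ψ q p = ∫ p, ‖𝓕 (mulConjTranslate φ ψ q) p‖ ^ 2 := by
    simp_rw [Pdens_eq_norm_sq_fourier]
    rfl
  _ = ∫ x, ‖mulConjTranslate φ ψ q x‖ ^ 2 := integral_norm_sq_fourier _
  _ = ∫ x, ‖φ (x - q)‖ ^ 2 * ‖ψ x‖ ^ 2 := by
    simp_rw [mulConjTranslate_apply, norm_mul, RCLike.norm_conj, mul_pow, mul_comm]

/-- Position margin of the covariant phase-space observable: for Schwartz φ, ψ and
every q, ∫ P_{φ,ψ}(q,p) dp = ∫ |φ(x−q)|²|ψ(x)|² dx = (f ⋆ g)(q) with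
f(y) = |φ(−y)|², g(y) = |ψ(y)|². -/
theorem stmt6 (φ ψ : SchwartzMap ℝ ℂ) (q : ℝ) :
    (∫ p : ℝ, Pdens (fun x => φ x) (fun x => ψ x) q p) =
      ∫ x : ℝ, ‖φ (x - q)‖ ^ 2 * ‖ψ x‖ ^ 2 ∧
    (∫ p : ℝ, Pdens (fun x => φ x) (fun x => ψ x) q p) =
      fConv (fun y => ‖φ (-y)‖ ^ 2) (fun y => ‖ψ y‖ ^ 2) q := by
  refine ⟨integral_Pdens_eq φ ψ q, ?_⟩
  simp only [integral_Pdens_eq, fConv, neg_sub]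
end

section
/- Momentum margin of a covariant phase-space observable: for Schwartz functions φ, ψ on ℝ and every p ∈ ℝ, ∫_ℝ P_{φ,ψ}(q,p) dq = ∫_ℝ |𝓕φ(ξ − p)|² |𝓕ψ(ξ)|² dξ = (F ⋆ G)(p), where F(η) = |𝓕φ(−η)|², G(η) = |𝓕ψ(η)|², and ⋆ denotes convolution of functions with respect to Lebesgue measure. Thus the momentum margin of the phase-space distribution is the smearing of the momentum distribution |𝓕ψ|² by the measure with density |𝓕φ(−·)|². -/
/-! The integral defining `Pdens φ ψ q p` is the convolution, evaluated at `q`, of the modulated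
function `x ↦ e^{-2πipx} ψ(x)` with `x ↦ conj φ(-x)`. By the convolution theorem its Fourier
transform is `ξ ↦ 𝓕ψ(ξ + p) · conj 𝓕φ(ξ)`, so Plancherel turns `∫ Pdens φ ψ q p dq` into
`∫ |𝓕ψ(ξ + p)|² |𝓕φ(ξ)|² dξ`, and the shift `ξ ↦ ξ - p` gives both forms of the claim. -/

open MeasureTheory
open scoped FourierTransform

open scoped ComplexConjugate Convolution InnerProductSpace

variable {V E : Type*} [NormedAddCommGroup V] [InnerProductSpace ℝ V]
  [NormedAddCommGroup E] [NormedSpace ℂ E]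

namespace SchwartzMap

noncomputable def conjNeg (f : 𝓢(V, ℂ)) : 𝓢(V, ℂ) :=
  postcompCLM Complex.conjCLE.toContinuousLinearMap
    (compCLMOfContinuousLinearEquiv ℝ (.neg ℝ) f)

theorem conjNeg_apply (f : 𝓢(V, ℂ)) (x : V) : conjNeg f x = conj (f (-x)) := rfl

end SchwartzMap

variable [FiniteDimensional ℝ V] [MeasurableSpace V] [BorelSpace V]

namespace Real

theorem fourierInv_comp_add_right (g : V → E) (a x : V) :
    𝓕⁻ (fun ξ ↦ g (ξ + a)) x = 𝐞 (-⟪a, x⟫_ℝ) • 𝓕⁻ g x :=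
  congrFun (VectorFourier.fourierIntegral_comp_add_right 𝐞 volume (-innerₗ V) g a) x

theorem fourier_conj (g : V → ℂ) (ξ : V) : 𝓕 (fun x ↦ conj (g x)) ξ = conj (𝓕⁻ g ξ) := by
  rw [fourier_eq, fourierInv_eq, ← integral_conj]
  congr 1 with x
  simp [Circle.smul_def, ← Circle.coe_inv_eq_conj, AddChar.map_neg_eq_inv]

end Real

namespace SchwartzMap

/-- Defined on the Fourier side, as the inverse transform of a translate, so that it is a
Schwartz function without proving that `x ↦ 𝐞 (-⟪a, x⟫)` has temperate growth. -/
noncomputable def modulate (a : V) (f : 𝓢(V, E)) : 𝓢(V, E) :=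
  𝓕⁻ (compSubConstCLM ℂ (-a) (𝓕 f))

variable [CompleteSpace E]

theorem modulate_apply (a : V) (f : 𝓢(V, E)) (x : V) :
    modulate a f x = 𝐞 (-⟪a, x⟫_ℝ) • f x := by
  have translate : ⇑(compSubConstCLM ℂ (-a) (𝓕 f)) = fun ξ ↦ 𝓕 f (ξ + a) := by
    ext ξ
    simp
  rw [modulate, fourierInv_coe, translate, Real.fourierInv_comp_add_right, ← fourierInv_coe,
    FourierTransform.fourierInv_fourier_eq]

theorem fourier_modulate (a : V) (f : 𝓢(V, E)) (ξ : V) :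
    𝓕 (modulate a f) ξ = 𝓕 f (ξ + a) := by
  simp [modulate]

theorem fourier_conjNeg (f : 𝓢(V, ℂ)) (ξ : V) : 𝓕 (conjNeg f) ξ = conj (𝓕 f ξ) := by
  rw [fourier_coe, show ⇑(conjNeg f) = fun x ↦ conj (f (-x)) from rfl, Real.fourier_conj,
    Real.fourierInv_eq_fourier_comp_neg]
  simp [fourier_coe]

theorem integral_norm_sq_convolution_mul (f g : 𝓢(V, ℂ)) :
    ∫ x, ‖convolution (.mul ℂ ℂ) f g x‖ ^ 2 = ∫ ξ, ‖𝓕 f ξ‖ ^ 2 * ‖𝓕 g ξ‖ ^ 2 := by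
  rw [← integral_norm_sq_fourier, fourier_convolution]
  simp [pairing_apply_apply, mul_pow]

end SchwartzMap

open SchwartzMap

theorem pdens_eq_norm_sq_convolution (φ ψ : 𝓢(ℝ, ℂ)) (q p : ℝ) :
    Pdens φ ψ q p = ‖convolution (.mul ℂ ℂ) (modulate p ψ) (conjNeg φ) q‖ ^ 2 := by
  rw [convolution_apply, convolution_def, Pdens]
  refine congrArg (‖·‖ ^ 2) (integral_congr_ae (.of_forall fun x ↦ ?_))
  simp only [ContinuousLinearMap.mul_apply', modulate_apply, conjNeg_apply, neg_sub,
    Circle.smul_def, Real.fourierChar_apply, smul_eq_mul, RCLike.inner_apply, conj_trivial]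
  push_cast
  ring_nf

/-- Momentum margin of the covariant phase-space observable: for Schwartz φ, ψ and
every p, ∫ P_{φ,ψ}(q,p) dq = ∫ |𝓕φ(ξ−p)|²|𝓕ψ(ξ)|² dξ = (F ⋆ G)(p) with
F(η) = |𝓕φ(−η)|², G(η) = |𝓕ψ(η)|². -/
theorem stmt7 (φ ψ : SchwartzMap ℝ ℂ) (p : ℝ) :
    (∫ q : ℝ, Pdens (fun x => φ x) (fun x => ψ x) q p) =
      ∫ ξ : ℝ, ‖𝓕 (fun x => φ x) (ξ - p)‖ ^ 2 * ‖𝓕 (fun x => ψ x) ξ‖ ^ 2 ∧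
    (∫ q : ℝ, Pdens (fun x => φ x) (fun x => ψ x) q p) =
      fConv (fun η => ‖𝓕 (fun x => φ x) (-η)‖ ^ 2) (fun η => ‖𝓕 (fun x => ψ x) η‖ ^ 2) p := by
  have margin : ∫ q : ℝ, Pdens φ ψ q p = ∫ ξ : ℝ, ‖𝓕 φ (ξ - p)‖ ^ 2 * ‖𝓕 ψ ξ‖ ^ 2 := by
    simp_rw [pdens_eq_norm_sq_convolution, integral_norm_sq_convolution_mul, fourier_modulate,
      fourier_conjNeg, Complex.norm_conj]
    rw [← integral_add_right_eq_self (fun ξ ↦ ‖𝓕 φ (ξ - p)‖ ^ 2 * ‖𝓕 ψ ξ‖ ^ 2) p]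
    simp only [add_sub_cancel_right, mul_comm]
  -- `𝓕 φ` and `𝓕 (fun x => φ x)` agree definitionally (`SchwartzMap.fourier_coe`).
  refine ⟨margin, margin.trans (integral_congr_ae (.of_forall fun ξ ↦ ?_))⟩
  dsimp only
  rw [neg_sub]
  rfl
end
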